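/- If the relation R of Tennant's classical rules is the identity predicate = (the iota-operator case), then GCI extended with these rules is inconsistent: for a unary predicate A, the sequent ⇒ A(τx(Ax∧¬Ax))∧¬A(τx(Ax∧¬Ax)) is provable, and consequently the empty sequent ⇒ is provable in that calculus. -/
import Mathlib


mutual
/-- Terms: bound variables, parameters, and complex terms `τxφ` formed by a
unary term-forming operator binding a variable in a formula. -/
inductive Tm : Type
  | var : ℕ → Tm
  | par : ℕ → Tm
  | tau : ℕ → Fm → Tm

/-- Formulas: atomic formulas (unary/binary predicates and identity) closed
under ¬, ∧, ∨, →, ↔, ∀, ∃. -/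
inductive Fm : Type
  | pred1 : ℕ → Tm → Fm
  | pred2 : ℕ → Tm → Tm → Fm
  | eq : Tm → Tm → Fm
  | neg : Fm → Fm
  | and : Fm → Fm → Fm
  | or : Fm → Fm → Fm
  | imp : Fm → Fm → Fm
  | iff : Fm → Fm → Fm
  | all : ℕ → Fm → Fm
  | ex : ℕ → Fm → Fm
end

/-- The membership atom `t ∈ t'` (the binary predicate with index 0). -/
def memF (t t' : Tm) : Fm := Fm.pred2 0 t t'

mutual
/-- Substitution of the term `u` for the bound variable `x` in a term. -/
def substT (x : ℕ) (u : Tm) : Tm → Tm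
  | .var y => if y = x then u else .var y
  | .par a => .par a
  | .tau y φ => if y = x then .tau y φ else .tau y (substF x u φ)

/-- Substitution `φ[x/u]` of the term `u` for the bound variable `x` in a formula. -/
def substF (x : ℕ) (u : Tm) : Fm → Fm
  | .pred1 n t => .pred1 n (substT x u t)
  | .pred2 n t t' => .pred2 n (substT x u t) (substT x u t')
  | .eq t t' => .eq (substT x u t) (substT x u t')
  | .neg φ => .neg (substF x u φ)
  | .and φ ψ => .and (substF x u φ) (substF x u ψ)
  | .or φ ψ => .or (substF x u φ) (substF x u ψ)
  | .imp φ ψ => .imp (substF x u φ) (substF x u ψ)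
  | .iff φ ψ => .iff (substF x u φ) (substF x u ψ)
  | .all y φ => if y = x then .all y φ else .all y (substF x u φ)
  | .ex y φ => if y = x then .ex y φ else .ex y (substF x u φ)
end

mutual
/-- Substitution of the parameter `b₂` for the parameter `b₁` in a term. -/
def substPT (b₁ b₂ : ℕ) : Tm → Tm
  | .var y => .var y
  | .par a => if a = b₁ then .par b₂ else .par a
  | .tau y φ => .tau y (substPF b₁ b₂ φ)

/-- Substitution `φ[b₁/b₂]` of the parameter `b₂` for the parameter `b₁` in a formula. -/
def substPF (b₁ b₂ : ℕ) : Fm → Fm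
  | .pred1 n t => .pred1 n (substPT b₁ b₂ t)
  | .pred2 n t t' => .pred2 n (substPT b₁ b₂ t) (substPT b₁ b₂ t')
  | .eq t t' => .eq (substPT b₁ b₂ t) (substPT b₁ b₂ t')
  | .neg φ => .neg (substPF b₁ b₂ φ)
  | .and φ ψ => .and (substPF b₁ b₂ φ) (substPF b₁ b₂ ψ)
  | .or φ ψ => .or (substPF b₁ b₂ φ) (substPF b₁ b₂ ψ)
  | .imp φ ψ => .imp (substPF b₁ b₂ φ) (substPF b₁ b₂ ψ)
  | .iff φ ψ => .iff (substPF b₁ b₂ φ) (substPF b₁ b₂ ψ)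
  | .all y φ => .all y (substPF b₁ b₂ φ)
  | .ex y φ => .ex y (substPF b₁ b₂ φ)
end

mutual
/-- Occurrence of the parameter `a` in a term. -/
def pOccT (a : ℕ) : Tm → Bool
  | .var _ => false
  | .par b => b == a
  | .tau _ φ => pOccF a φ

/-- Occurrence of the parameter `a` in a formula. -/
def pOccF (a : ℕ) : Fm → Bool
  | .pred1 _ t => pOccT a t
  | .pred2 _ t t' => pOccT a t || pOccT a t'
  | .eq t t' => pOccT a t || pOccT a t'
  | .neg φ => pOccF a φ
  | .and φ ψ => pOccF a φ || pOccF a ψ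
  | .or φ ψ => pOccF a φ || pOccF a ψ
  | .imp φ ψ => pOccF a φ || pOccF a ψ
  | .iff φ ψ => pOccF a φ || pOccF a ψ
  | .all _ φ => pOccF a φ
  | .ex _ φ => pOccF a φ
end

mutual
/-- Occurrence (free, bound or as a binder) of the variable `x` in a term. -/
def vOccT (x : ℕ) : Tm → Bool
  | .var y => y == x
  | .par _ => false
  | .tau y φ => y == x || vOccF x φ

/-- Occurrence (free, bound or as a binder) of the variable `x` in a formula. -/
def vOccF (x : ℕ) : Fm → Bool
  | .pred1 _ t => vOccT x t
  | .pred2 _ t t' => vOccT x t || vOccT x t'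
  | .eq t t' => vOccT x t || vOccT x t'
  | .neg φ => vOccF x φ
  | .and φ ψ => vOccF x φ || vOccF x ψ
  | .or φ ψ => vOccF x φ || vOccF x ψ
  | .imp φ ψ => vOccF x φ || vOccF x ψ
  | .iff φ ψ => vOccF x φ || vOccF x ψ
  | .all y φ => y == x || vOccF x φ
  | .ex y φ => y == x || vOccF x φ
end

/-- The parameter `a` is fresh for (does not occur in) the formula `φ`. -/
def FreshF (a : ℕ) (φ : Fm) : Prop := pOccF a φ = false

/-- The parameter `a` is fresh for the term `t`. -/
def FreshT (a : ℕ) (t : Tm) : Prop := pOccT a t = false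

/-- The parameter `a` is fresh for every formula of the multiset `Γ`. -/
def FreshM (a : ℕ) (Γ : Multiset Fm) : Prop := ∀ φ ∈ Γ, pOccF a φ = false

/-- Atomic formulas. -/
def Atomic : Fm → Prop
  | .pred1 _ _ => True
  | .pred2 _ _ _ => True
  | .eq _ _ => True
  | _ => False

/-- The constraints that a stratification assignment `σ` must satisfy on a formula:
for every membership atom `t ∈ t'` we need `σ t' = σ t + 1` and for every identity
atom `t = t'` we need `σ t = σ t'`. -/
def stratOK (σ : Tm → ℤ) : Fm → Prop
  | .pred2 0 t t' => σ t' = σ t + 1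
  | .eq t t' => σ t = σ t'
  | .neg φ => stratOK σ φ
  | .and φ ψ => stratOK σ φ ∧ stratOK σ ψ
  | .or φ ψ => stratOK σ φ ∧ stratOK σ ψ
  | .imp φ ψ => stratOK σ φ ∧ stratOK σ ψ
  | .iff φ ψ => stratOK σ φ ∧ stratOK σ ψ
  | .all _ φ => stratOK σ φ
  | .ex _ φ => stratOK σ φ
  | _ => True

/-- A formula is stratified if some integer assignment satisfies all its
atomic constraints. -/
def Stratified (φ : Fm) : Prop := ∃ σ : Tm → ℤ, stratOK σ φ

/-- Flags selecting the rules of the various sequent calculi considered. -/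
structure Flags where
  /-- the rule (Cut) -/
  cut : Bool := true
  /-- pure variant: (∀⇒),(⇒∃) restricted to instantiation by parameters -/
  pure : Bool := false
  /-- the rule (Ref) -/
  ref : Bool := false
  /-- the rule (2LL) for atomic formulas -/
  ll2 : Bool := false
  /-- the rule (Ext) -/
  ext : Bool := false
  /-- the rule (AV) -/
  av : Bool := false
  /-- the rule (ExtAV) -/
  extav : Bool := false
  /-- the rule (a⇒) -/
  aIntro : Bool := false
  /-- axiomatic sequents ⇒EXT -/
  axEXT : Bool := false
  /-- axiomatic sequents ⇒AV -/
  axAV : Bool := false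
  /-- axiomatic sequents ⇒EXTAV -/
  axEXTAV : Bool := false
  /-- Tennant's classical rules (⇒τ),(τ⇒) for the given relation `R` -/
  tenn : Option (Tm → Tm → Fm) := none
  /-- axiomatic sequents for both halves of the Hintikka axiom for the given `R` -/
  axHA : Option (Tm → Tm → Fm) := none
  /-- the NF rules (⇒=) and (=⇒) -/
  eqNF : Bool := false
  /-- the NF rules (Abs⇒) and (⇒Abs) -/
  abs : Bool := false
  /-- the rule (3LL) for ∈-atoms -/
  ll3 : Bool := false
  /-- the GTNF rules (⇒:) and (:⇒) -/
  colon : Bool := false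
  /-- the rule (2LL') for ∈-atoms -/
  ll2' : Bool := false
  /-- the rule (3LL') for =-atoms -/
  ll3' : Bool := false
  /-- axiomatic sequents of the axiomatic system for NF -/
  axNF : Bool := false

/-- `Dh F n Γ Δ` : the sequent `Γ ⇒ Δ` has a proof of height at most `n` in the
sequent calculus determined by the flags `F`. -/
inductive Dh (F : Flags) : ℕ → Multiset Fm → Multiset Fm → Prop
  | ax : ∀ n φ Γ Δ, Dh F (n+1) (φ ::ₘ Γ) (φ ::ₘ Δ)
  | cut : ∀ n φ Γ Δ Γ' Δ', F.cut = true →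
      Dh F n Γ (φ ::ₘ Δ) → Dh F n (φ ::ₘ Γ') Δ' → Dh F (n+1) (Γ + Γ') (Δ + Δ')
  | wL : ∀ n φ Γ Δ, Dh F n Γ Δ → Dh F (n+1) (φ ::ₘ Γ) Δ
  | wR : ∀ n φ Γ Δ, Dh F n Γ Δ → Dh F (n+1) Γ (φ ::ₘ Δ)
  | cL : ∀ n φ Γ Δ, Dh F n (φ ::ₘ φ ::ₘ Γ) Δ → Dh F (n+1) (φ ::ₘ Γ) Δ
  | cR : ∀ n φ Γ Δ, Dh F n Γ (φ ::ₘ φ ::ₘ Δ) → Dh F (n+1) Γ (φ ::ₘ Δ)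
  | negL : ∀ n φ Γ Δ, Dh F n Γ (φ ::ₘ Δ) → Dh F (n+1) (Fm.neg φ ::ₘ Γ) Δ
  | negR : ∀ n φ Γ Δ, Dh F n (φ ::ₘ Γ) Δ → Dh F (n+1) Γ (Fm.neg φ ::ₘ Δ)
  | andL : ∀ n φ ψ Γ Δ, Dh F n (φ ::ₘ ψ ::ₘ Γ) Δ → Dh F (n+1) (Fm.and φ ψ ::ₘ Γ) Δ
  | andR : ∀ n φ ψ Γ Δ, Dh F n Γ (φ ::ₘ Δ) → Dh F n Γ (ψ ::ₘ Δ) →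
      Dh F (n+1) Γ (Fm.and φ ψ ::ₘ Δ)
  | orL : ∀ n φ ψ Γ Δ, Dh F n (φ ::ₘ Γ) Δ → Dh F n (ψ ::ₘ Γ) Δ →
      Dh F (n+1) (Fm.or φ ψ ::ₘ Γ) Δ
  | orR : ∀ n φ ψ Γ Δ, Dh F n Γ (φ ::ₘ ψ ::ₘ Δ) → Dh F (n+1) Γ (Fm.or φ ψ ::ₘ Δ)
  | impL : ∀ n φ ψ Γ Δ, Dh F n Γ (φ ::ₘ Δ) → Dh F n (ψ ::ₘ Γ) Δ →
      Dh F (n+1) (Fm.imp φ ψ ::ₘ Γ) Δ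
  | impR : ∀ n φ ψ Γ Δ, Dh F n (φ ::ₘ Γ) (ψ ::ₘ Δ) → Dh F (n+1) Γ (Fm.imp φ ψ ::ₘ Δ)
  | iffL : ∀ n φ ψ Γ Δ, Dh F n Γ (φ ::ₘ ψ ::ₘ Δ) → Dh F n (φ ::ₘ ψ ::ₘ Γ) Δ →
      Dh F (n+1) (Fm.iff φ ψ ::ₘ Γ) Δ
  | iffR : ∀ n φ ψ Γ Δ, Dh F n (φ ::ₘ Γ) (ψ ::ₘ Δ) → Dh F n (ψ ::ₘ Γ) (φ ::ₘ Δ) →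
      Dh F (n+1) Γ (Fm.iff φ ψ ::ₘ Δ)
  | allL : ∀ n x φ t Γ Δ, (F.pure = true → ∃ a, t = Tm.par a) →
      Dh F n (substF x t φ ::ₘ Γ) Δ → Dh F (n+1) (Fm.all x φ ::ₘ Γ) Δ
  | exR : ∀ n x φ t Γ Δ, (F.pure = true → ∃ a, t = Tm.par a) →
      Dh F n Γ (substF x t φ ::ₘ Δ) → Dh F (n+1) Γ (Fm.ex x φ ::ₘ Δ)
  | allR : ∀ n x φ a Γ Δ, FreshF a φ → FreshM a Γ → FreshM a Δ →
      Dh F n Γ (substF x (Tm.par a) φ ::ₘ Δ) → Dh F (n+1) Γ (Fm.all x φ ::ₘ Δ)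
  | exL : ∀ n x φ a Γ Δ, FreshF a φ → FreshM a Γ → FreshM a Δ →
      Dh F n (substF x (Tm.par a) φ ::ₘ Γ) Δ → Dh F (n+1) (Fm.ex x φ ::ₘ Γ) Δ
  | ref : ∀ n t Γ Δ, F.ref = true → Dh F n (Fm.eq t t ::ₘ Γ) Δ → Dh F (n+1) Γ Δ
  | ll2 : ∀ n x φ t₁ t₂ Γ Δ, F.ll2 = true → Atomic φ →
      Dh F n Γ (Fm.eq t₁ t₂ ::ₘ Δ) → Dh F n Γ (substF x t₁ φ ::ₘ Δ) →
      Dh F (n+1) Γ (substF x t₂ φ ::ₘ Δ)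
  | ext : ∀ n x φ ψ a Γ Δ, F.ext = true →
      FreshF a φ → FreshF a ψ → FreshM a Γ → FreshM a Δ →
      Dh F n (substF x (Tm.par a) φ ::ₘ Γ) (substF x (Tm.par a) ψ ::ₘ Δ) →
      Dh F n (substF x (Tm.par a) ψ ::ₘ Γ) (substF x (Tm.par a) φ ::ₘ Δ) →
      Dh F (n+1) Γ (Fm.eq (Tm.tau x φ) (Tm.tau x ψ) ::ₘ Δ)
  | av : ∀ n x y φ Γ Δ, F.av = true → vOccF y φ = false →
      Dh F n (Fm.eq (Tm.tau x φ) (Tm.tau y (substF x (Tm.var y) φ)) ::ₘ Γ) Δ →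
      Dh F (n+1) Γ Δ
  | extav : ∀ n x y φ ψ a b Γ Δ, F.extav = true → x ≠ y → a ≠ b →
      FreshF a φ → FreshF a ψ → FreshM a Γ → FreshM a Δ →
      FreshF b φ → FreshF b ψ → FreshM b Γ → FreshM b Δ →
      Dh F n (Fm.eq (Tm.par a) (Tm.par b) ::ₘ substF x (Tm.par a) φ ::ₘ Γ)
        (substF y (Tm.par b) ψ ::ₘ Δ) →
      Dh F n (Fm.eq (Tm.par a) (Tm.par b) ::ₘ substF y (Tm.par b) ψ ::ₘ Γ)
        (substF x (Tm.par a) φ ::ₘ Δ) →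
      Dh F (n+1) Γ (Fm.eq (Tm.tau x φ) (Tm.tau y ψ) ::ₘ Δ)
  | aIntro : ∀ n x φ a Γ Δ, F.aIntro = true → FreshF a φ → FreshM a Γ → FreshM a Δ →
      Dh F n (Fm.eq (Tm.par a) (Tm.tau x φ) ::ₘ Γ) Δ → Dh F (n+1) Γ Δ
  | axEXT : ∀ n x φ ψ, F.axEXT = true →
      Dh F (n+1) 0 {Fm.imp (Fm.all x (Fm.iff φ ψ)) (Fm.eq (Tm.tau x φ) (Tm.tau x ψ))}
  | axAV : ∀ n x y φ, F.axAV = true → vOccF y φ = false →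
      Dh F (n+1) 0 {Fm.eq (Tm.tau x φ) (Tm.tau y (substF x (Tm.var y) φ))}
  | axEXTAV : ∀ n x y φ ψ, F.axEXTAV = true → x ≠ y →
      Dh F (n+1) 0
        {Fm.imp (Fm.all x (Fm.all y (Fm.imp (Fm.eq (Tm.var x) (Tm.var y)) (Fm.iff φ ψ))))
          (Fm.eq (Tm.tau x φ) (Tm.tau y ψ))}
  | tauR : ∀ n R x φ t a Γ Δ, F.tenn = some R → FreshF a φ → FreshM a Γ → FreshM a Δ →
      Dh F n (substF x (Tm.par a) φ ::ₘ Γ) (R (Tm.par a) t ::ₘ Δ) →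
      Dh F n (R (Tm.par a) t ::ₘ Γ) (substF x (Tm.par a) φ ::ₘ Δ) →
      Dh F (n+1) Γ (Fm.eq t (Tm.tau x φ) ::ₘ Δ)
  | tauL1 : ∀ n R x φ t b Γ Δ, F.tenn = some R →
      Dh F n Γ (substF x (Tm.par b) φ ::ₘ Δ) → Dh F n (R (Tm.par b) t ::ₘ Γ) Δ →
      Dh F (n+1) (Fm.eq t (Tm.tau x φ) ::ₘ Γ) Δ
  | tauL2 : ∀ n R x φ t b Γ Δ, F.tenn = some R →
      Dh F n Γ (R (Tm.par b) t ::ₘ Δ) → Dh F n (substF x (Tm.par b) φ ::ₘ Γ) Δ →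
      Dh F (n+1) (Fm.eq t (Tm.tau x φ) ::ₘ Γ) Δ
  | axHA1 : ∀ n R x φ t, F.axHA = some R →
      Dh F (n+1) {Fm.eq t (Tm.tau x φ)} {Fm.all x (Fm.iff φ (R (Tm.var x) t))}
  | axHA2 : ∀ n R x φ t, F.axHA = some R →
      Dh F (n+1) {Fm.all x (Fm.iff φ (R (Tm.var x) t))} {Fm.eq t (Tm.tau x φ)}
  | eqNFR : ∀ n t t' a Γ Δ, F.eqNF = true →
      FreshT a t → FreshT a t' → FreshM a Γ → FreshM a Δ →
      Dh F n (memF (Tm.par a) t ::ₘ Γ) (memF (Tm.par a) t' ::ₘ Δ) →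
      Dh F n (memF (Tm.par a) t' ::ₘ Γ) (memF (Tm.par a) t ::ₘ Δ) →
      Dh F (n+1) Γ (Fm.eq t t' ::ₘ Δ)
  | eqNFL : ∀ n t t' b Γ Δ, F.eqNF = true →
      Dh F n Γ (memF (Tm.par b) t ::ₘ memF (Tm.par b) t' ::ₘ Δ) →
      Dh F n (memF (Tm.par b) t ::ₘ memF (Tm.par b) t' ::ₘ Γ) Δ →
      Dh F (n+1) (Fm.eq t t' ::ₘ Γ) Δ
  | absL : ∀ n x φ t Γ Δ, F.abs = true → Stratified φ →
      Dh F n (substF x t φ ::ₘ Γ) Δ → Dh F (n+1) (memF t (Tm.tau x φ) ::ₘ Γ) Δ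
  | absR : ∀ n x φ t Γ Δ, F.abs = true → Stratified φ →
      Dh F n Γ (substF x t φ ::ₘ Δ) → Dh F (n+1) Γ (memF t (Tm.tau x φ) ::ₘ Δ)
  | ll3a : ∀ n t t' t'' Γ Δ, F.ll3 = true →
      Dh F n Γ (Fm.eq t t' ::ₘ Δ) → Dh F n Γ (memF t'' t ::ₘ Δ) →
      Dh F n (memF t'' t' ::ₘ Γ) Δ → Dh F (n+1) Γ Δ
  | ll3b : ∀ n t t' t'' Γ Δ, F.ll3 = true →
      Dh F n Γ (Fm.eq t t' ::ₘ Δ) → Dh F n Γ (memF t t'' ::ₘ Δ) →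
      Dh F n (memF t' t'' ::ₘ Γ) Δ → Dh F (n+1) Γ Δ
  | colonR : ∀ n x φ t a Γ Δ, F.colon = true → Stratified φ →
      FreshF a φ → FreshM a Γ → FreshM a Δ →
      Dh F n (substF x (Tm.par a) φ ::ₘ Γ) (memF (Tm.par a) t ::ₘ Δ) →
      Dh F n (memF (Tm.par a) t ::ₘ Γ) (substF x (Tm.par a) φ ::ₘ Δ) →
      Dh F (n+1) Γ (Fm.eq t (Tm.tau x φ) ::ₘ Δ)
  | colonL1 : ∀ n x φ t b Γ Δ, F.colon = true → Stratified φ →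
      Dh F n Γ (substF x (Tm.par b) φ ::ₘ Δ) → Dh F n (memF (Tm.par b) t ::ₘ Γ) Δ →
      Dh F (n+1) (Fm.eq t (Tm.tau x φ) ::ₘ Γ) Δ
  | colonL2 : ∀ n x φ t b Γ Δ, F.colon = true → Stratified φ →
      Dh F n Γ (memF (Tm.par b) t ::ₘ Δ) → Dh F n (substF x (Tm.par b) φ ::ₘ Γ) Δ →
      Dh F (n+1) (Fm.eq t (Tm.tau x φ) ::ₘ Γ) Δ
  | ll2'a : ∀ n t t' t'' Γ Δ, F.ll2' = true →
      Dh F n Γ (Fm.eq t t' ::ₘ Δ) → Dh F n Γ (memF t'' t ::ₘ Δ) →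
      Dh F (n+1) Γ (memF t'' t' ::ₘ Δ)
  | ll2'b : ∀ n t t' t'' Γ Δ, F.ll2' = true →
      Dh F n Γ (Fm.eq t t' ::ₘ Δ) → Dh F n Γ (memF t t'' ::ₘ Δ) →
      Dh F (n+1) Γ (memF t' t'' ::ₘ Δ)
  | ll3' : ∀ n t t' t'' Γ Δ, F.ll3' = true →
      Dh F n Γ (Fm.eq t t' ::ₘ Δ) → Dh F n Γ (Fm.eq t t'' ::ₘ Δ) →
      Dh F n (Fm.eq t' t'' ::ₘ Γ) Δ → Dh F (n+1) Γ Δ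
  | axNF1 : ∀ n x y φ, F.axNF = true → Stratified φ →
      Dh F (n+1) 0 {Fm.all x (Fm.iff (memF (Tm.var x) (Tm.tau y φ)) (substF y (Tm.var x) φ))}
  | axNF2 : ∀ n x y z, F.axNF = true → x ≠ y → x ≠ z → y ≠ z →
      Dh F (n+1) 0
        {Fm.all x (Fm.all y (Fm.all z (Fm.imp (Fm.eq (Tm.var x) (Tm.var y))
          (Fm.imp (memF (Tm.var x) (Tm.var z)) (memF (Tm.var y) (Tm.var z))))))}
  | axNF3 : ∀ n x y z, F.axNF = true → x ≠ y → x ≠ z → y ≠ z →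
      Dh F (n+1) 0
        {Fm.all x (Fm.all y (Fm.iff (Fm.eq (Tm.var x) (Tm.var y))
          (Fm.all z (Fm.iff (memF (Tm.var z) (Tm.var x)) (memF (Tm.var z) (Tm.var y))))))}

/-- Provability of the sequent `Γ ⇒ Δ` in the calculus determined by `F`. -/
def Proves (F : Flags) (Γ Δ : Multiset Fm) : Prop := ∃ n, Dh F n Γ Δ

/-- GC: classical first-order sequent calculus. -/
def GC : Flags := {}

/-- GCI: GC with the identity rules (Ref) and (2LL). -/
def GCI : Flags := { ref := true, ll2 := true }

/-- GPCI: the pure variant of GCI. -/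
def GPCI : Flags := { pure := true, ref := true, ll2 := true }

/-- GS: GPCI + (Ext) + (AV) + (a⇒). -/
def GS : Flags := { pure := true, ref := true, ll2 := true, ext := true, av := true, aIntro := true }

/-- GS': GPCI + (ExtAV) + (a⇒). -/
def GS' : Flags := { pure := true, ref := true, ll2 := true, extav := true, aIntro := true }

/-- GSNF: GPC + (⇒=) + (=⇒) + (Abs⇒) + (⇒Abs) + (3LL). -/
def GSNF : Flags := { pure := true, eqNF := true, abs := true, ll3 := true }

/-- GTNF: GPC + (⇒:) + (:⇒) + (Ref) + (2LL') + (3LL'). -/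
def GTNF : Flags := { pure := true, colon := true, ref := true, ll2' := true, ll3' := true }

/-- The axiomatic sequent system for NF: GC + the NF axiomatic sequents. -/
def NFax : Flags := { axNF := true }

/-- GCI with Tennant's classical rules where the relation R is identity
(the iota-operator case). -/
def GCTeq : Flags := { GCI with tenn := some Fm.eq }

/-- With R taken to be =, GCI + Tennant's classical rules is inconsistent:
the contradiction A(τx(Ax∧¬Ax))∧¬A(τx(Ax∧¬Ax)) is provable, and hence the
empty sequent is provable. -/
theorem iota_tennant_inconsistent (x : ℕ) :
    Proves GCTeq 0
      {Fm.and
        (Fm.pred1 0 (Tm.tau x (Fm.and (Fm.pred1 0 (Tm.var x)) (Fm.neg (Fm.pred1 0 (Tm.var x))))))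
        (Fm.neg (Fm.pred1 0
          (Tm.tau x (Fm.and (Fm.pred1 0 (Tm.var x)) (Fm.neg (Fm.pred1 0 (Tm.var x)))))))} ∧
    Proves GCTeq 0 0 := by
  have hcut : GCTeq.cut = true := rfl
  have href : GCTeq.ref = true := rfl
  have htenn : GCTeq.tenn = some Fm.eq := rfl
  set φ0 : Fm := Fm.and (Fm.pred1 0 (Tm.var x)) (Fm.neg (Fm.pred1 0 (Tm.var x))) with hφ0
  set T : Tm := Tm.tau x φ0 with hT
  set Ψ : Fm := Fm.and (Fm.pred1 0 T) (Fm.neg (Fm.pred1 0 T)) with hΨ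
  set φa : Fm := Fm.and (Fm.pred1 0 (Tm.par 0)) (Fm.neg (Fm.pred1 0 (Tm.par 0))) with hφa
  have hsub : substF x (Tm.par 0) φ0 = φa := by
    simp [hφ0, hφa, substF, substT]
  -- φ(a) with a := parameter 0
  -- D0 : a = T ⇒ φ(a), via (τ⇒) with b := a, using Ref for ⇒ a = a
  have D0p1 : Dh GCTeq 3 0 (Fm.eq (Tm.par 0) (Tm.par 0) ::ₘ φa ::ₘ 0) :=
    Dh.ref 2 (Tm.par 0) _ _ href (Dh.ax 1 _ 0 (φa ::ₘ 0))
  have D0p2 : Dh GCTeq 3 (substF x (Tm.par 0) φ0 ::ₘ 0) (φa ::ₘ 0) := by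
    rw [hsub]; exact Dh.ax 2 φa 0 0
  have D0 : Dh GCTeq 4 (Fm.eq (Tm.par 0) T ::ₘ 0) (φa ::ₘ 0) :=
    Dh.tauL2 3 Fm.eq x φ0 (Tm.par 0) 0 0 (φa ::ₘ 0) htenn D0p1 D0p2
  -- D0' : φ(a) ⇒ Ψ, ex falso
  have D0' : Dh GCTeq 4 (φa ::ₘ 0) (Ψ ::ₘ 0) := by
    refine Dh.andL 3 _ _ 0 (Ψ ::ₘ 0) ?_
    have hswap : (Fm.pred1 0 (Tm.par 0) ::ₘ Fm.neg (Fm.pred1 0 (Tm.par 0)) ::ₘ (0 : Multiset Fm))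
        = Fm.neg (Fm.pred1 0 (Tm.par 0)) ::ₘ Fm.pred1 0 (Tm.par 0) ::ₘ 0 :=
      Multiset.cons_swap _ _ _
    rw [hswap]
    exact Dh.negL 2 _ _ _ (Dh.ax 1 (Fm.pred1 0 (Tm.par 0)) 0 (Ψ ::ₘ 0))
  -- D1 : a = T ⇒ Ψ, by cut
  have D1 : Dh GCTeq 5 (Fm.eq (Tm.par 0) T ::ₘ 0) (Ψ ::ₘ 0) := by
    have h := Dh.cut 4 φa (Fm.eq (Tm.par 0) T ::ₘ 0) 0 0 (Ψ ::ₘ 0) hcut D0 D0'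
    simpa using h
  -- D2 : ∃y (y = T) ⇒ Ψ
  have D2 : Dh GCTeq 6 (Fm.ex x (Fm.eq (Tm.var x) T) ::ₘ 0) (Ψ ::ₘ 0) := by
    refine Dh.exL 5 x (Fm.eq (Tm.var x) T) 0 0 (Ψ ::ₘ 0) ?_ ?_ ?_ ?_
    · simp [FreshF, pOccF, pOccT, hT, hφ0]
    · intro ψ hψ; simp at hψ
    · intro ψ hψ
      simp only [Multiset.mem_cons, Multiset.notMem_zero, or_false] at hψ
      subst hψ
      simp [hΨ, pOccF, pOccT, hT, hφ0]
    · have hs : substF x (Tm.par 0) (Fm.eq (Tm.var x) T) = Fm.eq (Tm.par 0) T := by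
        simp [substF, substT, hT]
      rw [hs]; exact D1
  -- D3 : ⇒ ∃y (y = T), witness T
  have D3 : Dh GCTeq 6 0 (Fm.ex x (Fm.eq (Tm.var x) T) ::ₘ 0) := by
    refine Dh.exR 5 x (Fm.eq (Tm.var x) T) T 0 0 (fun hp => by simp [GCTeq, GCI] at hp) ?_
    have hs : substF x T (Fm.eq (Tm.var x) T) = Fm.eq T T := by
      simp [substF, substT, hT]
    rw [hs]
    exact Dh.ref 4 T 0 (Fm.eq T T ::ₘ 0) href (Dh.ax 3 (Fm.eq T T) 0 0)
  -- D4 : ⇒ Ψ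
  have D4 : Dh GCTeq 7 0 (Ψ ::ₘ 0) := by
    have h := Dh.cut 6 (Fm.ex x (Fm.eq (Tm.var x) T)) 0 0 0 (Ψ ::ₘ 0) hcut D3 D2
    simpa using h
  -- D5 : Ψ ⇒
  have D5 : Dh GCTeq 7 (Ψ ::ₘ 0) 0 := by
    refine Dh.andL 6 _ _ 0 0 ?_
    have hswap : (Fm.pred1 0 T ::ₘ Fm.neg (Fm.pred1 0 T) ::ₘ (0 : Multiset Fm))
        = Fm.neg (Fm.pred1 0 T) ::ₘ Fm.pred1 0 T ::ₘ 0 := Multiset.cons_swap _ _ _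
    rw [hswap]
    exact Dh.negL 5 _ _ _ (Dh.ax 4 (Fm.pred1 0 T) 0 0)
  -- D6 : ⇒
  have D6 : Dh GCTeq 8 0 0 := by
    have h := Dh.cut 7 Ψ 0 0 0 0 hcut D4 D5
    simpa using h
  exact ⟨⟨7, D4⟩, ⟨8, D6⟩⟩
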